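/- Let P be a string of length m and k ∈ [1,m]. Then at least one of the following holds: (a) P contains 2k disjoint fragments B_1,…,B_{2k}, each of length ⌊m/(8k)⌋ and smallest period greater than m/(128k); (b) P contains disjoint fragments R_1,…,R_r of total length at least 3m/8, where each R_i has length ≥ m/(8k) and admits a primitive string Q_i with |Q_i| ≤ m/(128k) and δ_H(R_i, Q_i*) = ⌈8k·|R_i|/m⌉; (c) there is a primitive string Q with |Q| ≤ m/(128k) and δ_H(P, Q*) < 8k. -/

import Mathlib

open List

variable {α : Type*}

/-- The fragment S[i..j) of a string (list) S. -/
def frag (S : List α) (i j : ℕ) : List α := (S.drop i).take (j - i)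

/-- Q^∞[a..b): the fragment of the infinite repetition of Q from a (incl.) to b (excl.). -/
def repPrefix [Inhabited α] (Q : List α) (a b : ℕ) : List α :=
  (List.range' a (b - a)).map (fun i => Q.getD (i % Q.length) default)

/-- Hamming distance of two strings of the same length (counted over positions of S). -/
def hamming [DecidableEq α] [Inhabited α] (S T : List α) : ℕ :=
  ((Finset.range S.length).filter
    (fun i => S.getD i default ≠ T.getD i default)).card

/-- δ_H(S, Q*): Hamming distance of S to the length-|S| prefix of Q^∞. -/
def hammingStar [DecidableEq α] [Inhabited α] (S Q : List α) : ℕ :=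
  hamming S (repPrefix Q 0 S.length)

/-- Unit-cost Levenshtein distance (replaces Mathlib's removed `levenshtein Levenshtein.defaultCost`). -/
def levenshteinUnit [DecidableEq α] : List α → List α → ℕ
  | [], ys => ys.length
  | x :: xs, [] => xs.length + 1
  | x :: xs, y :: ys =>
      min (levenshteinUnit xs (y :: ys) + 1)
        (min (levenshteinUnit (x :: xs) ys + 1) (levenshteinUnit xs ys + if x = y then 0 else 1))

/-- Edit (Levenshtein) distance. -/
def editDist [DecidableEq α] (S T : List α) : ℕ :=
  levenshteinUnit S T

/-- A string is primitive if it is nonempty and not a proper power of a string. -/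
def Primitive (Q : List α) : Prop :=
  Q ≠ [] ∧ ∀ (U : List α) (t : ℕ), 2 ≤ t → Q ≠ (List.replicate t U).flatten

/-- p is a period of S. -/
def IsPeriod [Inhabited α] (p : ℕ) (S : List α) : Prop :=
  0 < p ∧ ∀ i, i + p < S.length → S.getD i default = S.getD (i + p) default

/-- per(S): the smallest period of S. -/
noncomputable def per [Inhabited α] (S : List α) : ℕ := sInf {p | IsPeriod p S}

/-- Occ^H_k(P,T): starting positions of k-mismatch occurrences of P in T. -/
def occH [DecidableEq α] [Inhabited α] (k : ℕ) (P T : List α) : Finset ℕ :=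
  (Finset.range (T.length - P.length + 1)).filter
    (fun i => hamming P (frag T i (i + P.length)) ≤ k)

/-- Exact occurrences of B in T. -/
def occExact [DecidableEq α] (B T : List α) : Finset ℕ :=
  (Finset.range (T.length + 1)).filter (fun i => frag T i (i + B.length) = B)

/-- Occ^E_k(P,T): starting positions of k-error (edit distance) occurrences of P in T. -/
def occE [DecidableEq α] (k : ℕ) (P T : List α) : Set ℕ :=
  {i | ∃ j, i ≤ j ∧ j ≤ T.length ∧ editDist P (frag T i j) ≤ k}

/-- δ_E^cyc(S,Q): minimum edit distance of S to any substring of Q^∞. -/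
noncomputable def edCyc [DecidableEq α] [Inhabited α] (S Q : List α) : ℕ :=
  sInf {d | ∃ i j, i ≤ j ∧ d = editDist S (repPrefix Q i j)}

/-- δ_E(S,Q*): minimum edit distance of S to a prefix of Q^∞. -/
noncomputable def edStar [DecidableEq α] [Inhabited α] (S Q : List α) : ℕ :=
  sInf {d | ∃ j, d = editDist S (repPrefix Q 0 j)}

/-- Minimum edit distance of T to a substring of Q^∞ starting at position x. -/
noncomputable def edStarAt [DecidableEq α] [Inhabited α] (T Q : List α) (x : ℕ) : ℕ :=
  sInf {d | ∃ j, x ≤ j ∧ d = editDist T (repPrefix Q x j)}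

/-- Minimum edit distance of T to a substring of Q^∞ ending at a position ≡ y (mod |Q|). -/
noncomputable def edEndAt [DecidableEq α] [Inhabited α] (T Q : List α) (y : ℕ) : ℕ :=
  sInf {d | ∃ i j, i ≤ j ∧ j % Q.length = y % Q.length ∧ d = editDist T (repPrefix Q i j)}

/-- Minimum edit distance of L to a substring of Q^∞ ending at a multiple of |Q|. -/
noncomputable def edEndMul [DecidableEq α] [Inhabited α] (L Q : List α) : ℕ :=
  sInf {d | ∃ i j, i ≤ j * Q.length ∧ d = editDist L (repPrefix Q i (j * Q.length))}

/-- The fragment S[i..j) of S is locked with respect to Q. -/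
def Locked [DecidableEq α] [Inhabited α] (S Q : List α) (i j : ℕ) : Prop :=
  (∃ a : ℕ, edCyc (frag S i j) Q = editDist (frag S i j) (repPrefix Q 0 (a * Q.length))) ∨
  (j = S.length ∧ edCyc (frag S i j) Q = edStar (frag S i j) Q) ∨
  (i = 0 ∧ edCyc (frag S i j) Q = edEndMul (frag S i j) Q) ∨
  (i = 0 ∧ j = S.length)

/-- rot^j(Q): rotation moving the last j (mod |Q|) characters to the front. -/
def rotR (Q : List α) (j : ℕ) : List α := Q.rotate (Q.length - j % Q.length)

/-- |Mis(T,Q*) ∩ [a,b)|. -/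
def misCount [DecidableEq α] [Inhabited α] (T Q : List α) (a b : ℕ) : ℕ :=
  ((Finset.Ico a b).filter (fun i => i < T.length ∧
     T.getD i default ≠ Q.getD (i % Q.length) default)).card

/-- μ_j: the total weight of aligned mismatch pairs of P and T against Q^∞ at shift j·|Q|:
a pair (τ = j|Q|+π, π) with π ∈ Mis(P,Q*), τ ∈ Mis(T,Q*) has weight 2 − δ_H(P[π],T[τ]). -/
def mu [DecidableEq α] [Inhabited α] (P T Q : List α) (j : ℕ) : ℕ :=
  ∑ π ∈ Finset.range P.length,
    if P.getD π default ≠ Q.getD (π % Q.length) default ∧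
       j * Q.length + π < T.length ∧
       T.getD (j * Q.length + π) default ≠ Q.getD ((j * Q.length + π) % Q.length) default
    then (if P.getD π default = T.getD (j * Q.length + π) default then 2 else 1)
    else 0

/-!
Scan `P` from left to right, keeping disjoint breaks and repetitive regions whose lengths add up
to at least the length `j` of the scanned prefix. At position `j` look at the window
`W = P[j, j + ⌊m/8k⌋)`. If `per W > m/128k`, then `W` is a new break. Otherwise `W` is a prefix
of `Q^∞` for a primitive `Q` of length `per W`; extend `W` to `R = P[j, e)`, moving `e` right until
the number of mismatches of `R` with `Q^∞` first reaches `⌈8k|R|/m⌉`. The count grows by at most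
one per step and the budget is monotone, so at that point they are equal, and `R` is a new region.
If the end of `P` comes first, move the left end of `R = P[j, m)` leftwards instead: since
`j < 5m/8`, the single region found this way already has length at least `3m/8`, and if even all
of `P` stays below the budget `8k`, then `Q` is an approximate period of `P`. The scan stops after
`2k` breaks or once the regions have total length `3m/8`; before that, `8 (j + ⌊m/8k⌋) < 5m`, so
there is room for the next window. When `m < 128k` every window is a break.
-/

section Periods

variable [Inhabited α]

theorem per_isPeriod (S : List α) : IsPeriod (per S) S :=
  Nat.sInf_mem (s := {p | IsPeriod p S}) ⟨S.length + 1, Nat.succ_pos _, fun _ h => by omega⟩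

theorem per_pos (S : List α) : 0 < per S := (per_isPeriod S).1

theorem per_le {S : List α} {p : ℕ} (h : IsPeriod p S) : per S ≤ p := Nat.sInf_le h

theorem IsPeriod.getD_mod {S : List α} {p : ℕ} (h : IsPeriod p S) {i : ℕ} (hi : i < S.length) :
    S.getD i default = S.getD (i % p) default := by
  induction i using Nat.strong_induction_on with
  | _ i ih =>
    rcases lt_or_ge i p with hip | hpi
    · rw [Nat.mod_eq_of_lt hip]
    · have hshift := h.2 (i - p) (by omega)
      rw [Nat.sub_add_cancel hpi] at hshift
      rw [← hshift, ih (i - p) (by have := h.1; omega) (by omega), ← Nat.mod_eq_sub_mod hpi]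

end Periods

section Primitive

theorem getD_take_of_lt (S : List α) {n i : ℕ} (d : α) (hi : i < n) :
    (S.take n).getD i d = S.getD i d := by
  simp [getD_eq_getElem?_getD, hi]

theorem getElem?_flatten_replicate {U : List α} {t i : ℕ} (hi : i < t * U.length) :
    (replicate t U).flatten[i]? = U[i % U.length]? := by
  induction t generalizing i with
  | zero => simp at hi
  | succ t ih =>
    rw [replicate_succ, flatten_cons]
    rcases lt_or_ge i U.length with hiU | hUi
    · rw [getElem?_append_left hiU, Nat.mod_eq_of_lt hiU]
    · rw [getElem?_append_right hUi, ih (by rw [Nat.succ_mul] at hi; omega),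
        ← Nat.mod_eq_sub_mod hUi]

theorem flatten_replicate_rotate (U : List α) (t n : ℕ) :
    (replicate t U).flatten.rotate n = (replicate t (U.rotate n)).flatten := by
  have hlen : (replicate t U).flatten.length = t * U.length := by simp
  refine ext_getElem? fun i => ?_
  rcases lt_or_ge i (t * U.length) with hi | hi
  · have hU : 0 < U.length := Nat.pos_of_mul_pos_left (a := t) (by omega)
    rw [getElem?_rotate (by rwa [hlen]), hlen, getElem?_flatten_replicate (Nat.mod_lt _ (by omega)),
      getElem?_flatten_replicate (by rwa [length_rotate]),
      length_rotate, getElem?_rotate (Nat.mod_lt _ hU), Nat.mod_mod_of_dvd _ (dvd_mul_left _ _),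
      Nat.mod_add_mod]
  · rw [getElem?_eq_none (by simpa), getElem?_eq_none (by simpa)]

theorem Primitive.rotate {Q : List α} (h : Primitive Q) (n : ℕ) : Primitive (Q.rotate n) := by
  refine ⟨by simpa using h.1, fun U t ht hU => ?_⟩
  obtain ⟨c, hc⟩ := (IsRotated.symm ⟨n, rfl⟩ : Q.rotate n ~r Q)
  exact h.2 (U.rotate c) t ht (by rw [← hc, hU, flatten_replicate_rotate])

theorem primitive_take_per [Inhabited α] {S : List α} (h : per S ≤ S.length) :
    Primitive (S.take (per S)) := by
  have hq := per_pos S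
  refine ⟨by rw [Ne, ← length_eq_zero_iff, length_take]; omega, fun U t ht hU => ?_⟩
  have hlen : per S = t * U.length := by simpa [h] using congrArg length hU
  have hUpos : 0 < U.length := Nat.pos_of_mul_pos_left (a := t) (by omega)
  have hUlt : U.length < per S := by rw [hlen]; exact lt_mul_left hUpos ht
  have hroot : ∀ i < S.length, S.getD i default = U.getD (i % U.length) default := by
    intro i hi
    have hiq := Nat.mod_lt i hq
    rw [(per_isPeriod S).getD_mod hi, ← getD_take_of_lt _ _ hiq, hU, getD_eq_getElem?_getD,
      getElem?_flatten_replicate (by rwa [← hlen]), ← getD_eq_getElem?_getD,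
      Nat.mod_mod_of_dvd _ ⟨t, by rw [hlen, Nat.mul_comm]⟩]
  have hperiod : IsPeriod U.length S :=
    ⟨hUpos, fun i hi => by rw [hroot i (by omega), hroot _ hi, Nat.add_mod_right]⟩
  exact absurd (per_le hperiod) (by omega)

end Primitive

section Mismatches

theorem length_frag {S : List α} {a b : ℕ} (hab : a ≤ b) (hb : b ≤ S.length) :
    (frag S a b).length = b - a := by
  simp only [frag, length_take, length_drop]; omega

theorem getD_frag (S : List α) {a b i : ℕ} (d : α) (hi : i < b - a) :
    (frag S a b).getD i d = S.getD (a + i) d := by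
  simp [frag, getD_eq_getElem?_getD, hi]

theorem getD_rotate_mod (Q : List α) (n i : ℕ) (d : α) :
    (Q.rotate n).getD (i % Q.length) d = Q.getD ((i + n) % Q.length) d := by
  rcases eq_or_ne Q [] with rfl | hQ
  · simp
  · rw [getD_eq_getElem?_getD, getElem?_rotate (Nat.mod_lt _ (length_pos_iff.2 hQ)),
      Nat.mod_add_mod, ← getD_eq_getElem?_getD]

variable [Inhabited α]

theorem getD_repPrefix (Q : List α) {n i : ℕ} (d : α) (hi : i < n) :
    (repPrefix Q 0 n).getD i d = Q.getD (i % Q.length) default := by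
  simp [repPrefix, getD_eq_getElem?_getD, hi]

variable [DecidableEq α]

theorem hammingStar_frag_rotate {P : List α} (Q : List α) {a b : ℕ} (hab : a ≤ b)
    (hb : b ≤ P.length) : hammingStar (frag P a b) (Q.rotate a) = misCount P Q a b := by
  rw [hammingStar, hamming, misCount, Finset.card_filter, Finset.card_filter,
    Finset.sum_Ico_eq_sum_range, length_frag hab hb]
  refine Finset.sum_congr rfl fun i hi => ?_
  rw [Finset.mem_range] at hi
  rw [getD_frag _ _ hi, getD_repPrefix _ _ hi, length_rotate, getD_rotate_mod, Nat.add_comm i a]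
  simp only [show a + i < P.length by omega, true_and]

theorem misCount_le_misCount_add (T Q : List α) (a b a' b' : ℕ) :
    misCount T Q a b ≤ misCount T Q a' b' + (a' - a) + (b - b') := by
  unfold misCount
  calc _ ≤ ((Finset.Ico a' b').filter _ ∪ Finset.Ico a a' ∪ Finset.Ico b' b).card := by
        refine Finset.card_le_card fun t ht => ?_
        simp only [Finset.mem_union, Finset.mem_filter, Finset.mem_Ico] at ht ⊢
        by_cases hta : t < a'
        · exact Or.inl (Or.inr ⟨by omega, hta⟩)
        by_cases htb : b' ≤ t
        · exact Or.inr ⟨htb, by omega⟩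
        · exact Or.inl (Or.inl ⟨⟨by omega, by omega⟩, ht.2⟩)
    _ ≤ _ := (Finset.card_union_le _ _).trans (by
        grw [Finset.card_union_le]; simp)

end Mismatches

theorem exists_primitive_misCount_eq_zero [DecidableEq α] [Inhabited α] {P : List α} {j L : ℕ}
    (hjL : j + L ≤ P.length) (hper : per (frag P j (j + L)) ≤ L) :
    ∃ Q : List α, Primitive Q ∧ Q.length = per (frag P j (j + L)) ∧
      misCount P Q j (j + L) = 0 := by
  set W := frag P j (j + L)
  set q := per W
  have hW : W.length = L := by rw [length_frag (by omega) hjL]; omega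
  have hq0 : 0 < q := per_pos W
  have hjq : j ≤ q * j := Nat.le_mul_of_pos_left j hq0
  -- rotating by `q * j - j ≡ -j` aligns the root with absolute positions in `P`
  refine ⟨(W.take q).rotate (q * j - j), (primitive_take_per (by omega)).rotate _,
    by simp [hW, hper], ?_⟩
  rw [misCount, Finset.card_eq_zero, Finset.filter_eq_empty_iff]
  intro t ht
  rw [Finset.mem_Ico] at ht
  have hmod : (t + (q * j - j)) % q = (t - j) % q := by
    rw [show t + (q * j - j) = t - j + q * j by omega, Nat.add_mul_mod_self_left]
  have hlen : (W.take q).length = q := by simp [hW, hper]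
  rw [not_and, not_not, length_rotate, getD_rotate_mod, hlen, hmod,
    getD_take_of_lt _ _ (Nat.mod_lt _ hq0),
    ← (per_isPeriod W).getD_mod (by omega), getD_frag _ _ (by omega), Nat.add_sub_cancel' ht.1]
  exact fun _ => rfl

def mismatchBudget (m k n : ℕ) : ℤ := ⌈(8 * k * n : ℚ) / m⌉

theorem mismatchBudget_mono (m k : ℕ) : Monotone (mismatchBudget m k) := fun _ _ h =>
  Int.ceil_mono (div_le_div_of_nonneg_right (by gcongr) (Nat.cast_nonneg m))

theorem mismatchBudget_eq_one {m k n : ℕ} (hpos : 0 < 8 * k * n) (hle : 8 * k * n ≤ m) :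
    mismatchBudget m k n = 1 := by
  have hm : (0 : ℚ) < m := by exact_mod_cast hpos.trans_le hle
  rw [mismatchBudget, Int.ceil_eq_iff, div_le_iff₀ hm]
  refine ⟨by norm_num; exact div_pos (by exact_mod_cast hpos) hm, ?_⟩
  simpa using (Nat.cast_le (α := ℚ)).2 hle

theorem mismatchBudget_self {m : ℕ} (k : ℕ) (hm : 0 < m) : mismatchBudget m k m = 8 * k := by
  rw [mismatchBudget, mul_div_cancel_right₀ _ (by positivity)]
  exact_mod_cast Int.ceil_natCast (8 * k)

theorem exists_eq_of_le_add_one_of_monotone {f g : ℕ → ℤ} (hf : ∀ n, f (n + 1) ≤ f n + 1)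
    (hg : Monotone g) {a b : ℕ} (hab : a ≤ b) (ha : f a < g a) (hb : g b ≤ f b) :
    ∃ c, a < c ∧ c ≤ b ∧ f c = g c := by
  induction b, hab using Nat.le_induction with
  | base => omega
  | succ b hab ih =>
    by_cases hgb : g b ≤ f b
    · obtain ⟨c, hac, hcb, hc⟩ := ih hgb
      exact ⟨c, hac, by omega, hc⟩
    · have := hf b
      have := hg (Nat.le_add_right b 1)
      exact ⟨b + 1, by omega, le_rfl, by omega⟩

def DisjointBefore {n : ℕ} (s len : Fin n → ℕ) (j : ℕ) : Prop :=
  (∀ i, s i + len i ≤ j) ∧ ∀ i i', i ≠ i' → s i + len i ≤ s i' ∨ s i' + len i' ≤ s i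

theorem DisjointBefore.mono {n : ℕ} {s len : Fin n → ℕ} {j j' : ℕ} (h : DisjointBefore s len j)
    (hj : j ≤ j') : DisjointBefore s len j' :=
  ⟨fun i => (h.1 i).trans hj, h.2⟩

theorem DisjointBefore.snoc {n : ℕ} {s : Fin n → ℕ} {len : Fin (n + 1) → ℕ} {j a : ℕ}
    (h : DisjointBefore s (fun i => len i.castSucc) j) (hj : j ≤ a) :
    DisjointBefore (Fin.snoc (α := fun _ => ℕ) s a) len (a + len (Fin.last n)) := by
  have hlt : ∀ i, s i + len i.castSucc ≤ a := fun i => (h.1 i).trans hj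
  constructor
  · intro i
    induction i using Fin.lastCases with
    | last => simp
    | cast i => simpa using (hlt i).trans (Nat.le_add_right a _)
  intro i i' hne
  induction i using Fin.lastCases with
  | last =>
    induction i' using Fin.lastCases with
    | last => exact absurd rfl hne
    | cast i' => simpa using Or.inr (hlt i')
  | cast i =>
    induction i' using Fin.lastCases with
    | last => simpa using Or.inl (hlt i)
    | cast i' => simpa using h.2 i i' (fun h => hne (h ▸ rfl))

section Outcomes

variable [Inhabited α]

def IsBreak (P : List α) (m k b : ℕ) : Prop :=
  m < 128 * k * per (frag P b (b + m / (8 * k)))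

def HasBreaks (P : List α) (m k : ℕ) : Prop :=
  ∃ b : Fin (2 * k) → ℕ,
    (∀ i, b i + m / (8 * k) ≤ m) ∧
    (∀ i j, i ≠ j → b i + m / (8 * k) ≤ b j ∨ b j + m / (8 * k) ≤ b i) ∧
    (∀ i, IsBreak P m k (b i))

theorem hasBreaks_of_lt (P : List α) {m k : ℕ} (h : m < 128 * k) : HasBreaks P m k := by
  set L := m / (8 * k)
  have hL : 8 * k * L ≤ m := Nat.mul_div_le m (8 * k)
  have hstep : ∀ {i i' : ℕ}, i < i' → i * L + L ≤ i' * L := fun hii' => by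
    rw [← Nat.succ_mul]; exact Nat.mul_le_mul_right L hii'
  refine ⟨fun i => i * L, fun i => ?_, fun i i' hne => ?_, fun i => ?_⟩
  · show (i : ℕ) * L + L ≤ m
    have := hstep (show (i : ℕ) < 2 * k from i.2)
    have : 2 * k * L ≤ 8 * k * L := Nat.mul_le_mul_right L (by omega)
    omega
  · rcases lt_or_gt_of_ne (Fin.val_ne_of_ne hne) with hlt | hlt
    · exact Or.inl (hstep hlt)
    · exact Or.inr (hstep hlt)
  · exact h.trans_le (Nat.le_mul_of_pos_right _ (per_pos _))

variable [DecidableEq α]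

def IsRepetitiveRegion (P : List α) (m k s len : ℕ) (Q : List α) : Prop :=
  m ≤ 8 * k * len ∧ Primitive Q ∧ 128 * k * Q.length ≤ m ∧
    (hammingStar (frag P s (s + len)) Q : ℤ) = mismatchBudget m k len

def HasRepetitiveRegions (P : List α) (m k : ℕ) : Prop :=
  ∃ (r : ℕ) (s len : Fin r → ℕ) (Qf : Fin r → List α),
    (∀ i, s i + len i ≤ m) ∧
    (∀ i j, i ≠ j → s i + len i ≤ s j ∨ s j + len j ≤ s i) ∧
    3 * m ≤ 8 * ∑ i, len i ∧
    (∀ i, m ≤ 8 * k * len i) ∧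
    (∀ i, Primitive (Qf i)) ∧
    (∀ i, 128 * k * (Qf i).length ≤ m) ∧
    (∀ i, (hammingStar (frag P (s i) (s i + len i)) (Qf i) : ℤ) = mismatchBudget m k (len i))

def HasApproxPeriod (P : List α) (m k : ℕ) : Prop :=
  ∃ Q : List α, Primitive Q ∧ 128 * k * Q.length ≤ m ∧ hammingStar P Q < 8 * k

theorem IsRepetitiveRegion.of_misCount {P Q : List α} {m k a b : ℕ} (hab : a ≤ b)
    (hb : b ≤ P.length) (hlen : m ≤ 8 * k * (b - a)) (hQ : Primitive Q)
    (hQm : 128 * k * Q.length ≤ m) (hmis : (misCount P Q a b : ℤ) = mismatchBudget m k (b - a)) :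
    IsRepetitiveRegion P m k a (b - a) (Q.rotate a) := by
  refine ⟨hlen, hQ.rotate a, by rwa [length_rotate], ?_⟩
  rwa [Nat.add_sub_cancel' hab, hammingStar_frag_rotate Q hab hb]

theorem IsRepetitiveRegion.hasRepetitiveRegions {P Q : List α} {m k s len : ℕ}
    (h : IsRepetitiveRegion P m k s len Q) (hend : s + len ≤ m) (hlen : 3 * m ≤ 8 * len) :
    HasRepetitiveRegions P m k :=
  ⟨1, fun _ => s, fun _ => len, fun _ => Q, fun _ => hend,
    fun i i' hne => absurd (Subsingleton.elim i i') hne, by simpa using hlen,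
    fun _ => h.1, fun _ => h.2.1, fun _ => h.2.2.1, fun _ => h.2.2.2⟩

end Outcomes

section Extension

variable [DecidableEq α] [Inhabited α]

theorem exists_isRepetitiveRegion_or_misCount_lt {P Q : List α} {m k j : ℕ}
    (hP : P.length = m) (hm : 128 * k ≤ m) (hk : 0 < k) (hjL : j + m / (8 * k) ≤ m)
    (hQ : Primitive Q) (hQm : 128 * k * Q.length ≤ m) (h0 : misCount P Q j (j + m / (8 * k)) = 0) :
    (∃ e, j + m / (8 * k) < e ∧ e ≤ m ∧ IsRepetitiveRegion P m k j (e - j) (Q.rotate j)) ∨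
      (misCount P Q j m : ℤ) < mismatchBudget m k (m - j) := by
  set L := m / (8 * k)
  have hL : 8 * k * L ≤ m := Nat.mul_div_le m (8 * k)
  have hL' : m < 8 * k * (L + 1) := Nat.lt_mul_div_succ m (by omega)
  have hL0 : 0 < L := Nat.div_pos (by omega) (by omega)
  rcases lt_or_ge (misCount P Q j m : ℤ) (mismatchBudget m k (m - j)) with hlt | hge
  · exact Or.inr hlt
  obtain ⟨e, hLe, hem, he⟩ := exists_eq_of_le_add_one_of_monotone
    (f := fun e => (misCount P Q j e : ℤ)) (g := fun e => mismatchBudget m k (e - j))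
    (fun e => by have := misCount_le_misCount_add P Q j (e + 1) j e; omega)
    ((mismatchBudget_mono m k).comp fun _ _ h => Nat.sub_le_sub_right h j) hjL
    (by simp [h0, mismatchBudget_eq_one (Nat.mul_pos (by omega) hL0) hL]) hge
  refine Or.inl ⟨e, hLe, hem, IsRepetitiveRegion.of_misCount (by omega) (by omega) ?_ hQ hQm he⟩
  have : 8 * k * (L + 1) ≤ 8 * k * (e - j) := Nat.mul_le_mul_left _ (by omega)
  omega

theorem hasRepetitiveRegions_or_hasApproxPeriod {P Q : List α} {m k j : ℕ} (hP : P.length = m)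
    (hk : 0 < k) (hj : 8 * j ≤ 5 * m) (hQ : Primitive Q) (hQm : 128 * k * Q.length ≤ m)
    (hlt : (misCount P Q j m : ℤ) < mismatchBudget m k (m - j)) :
    HasRepetitiveRegions P m k ∨ HasApproxPeriod P m k := by
  have hm : 0 < m := by
    have := length_pos_iff.2 hQ.1
    have := Nat.le_mul_of_pos_right (128 * k) this
    omega
  rcases lt_or_ge (misCount P Q 0 m : ℤ) (8 * k) with hP8 | hge
  · refine Or.inr ⟨Q, hQ, hQm, ?_⟩
    have := hammingStar_frag_rotate Q (Nat.zero_le m) hP.ge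
    rw [rotate_zero, show frag P 0 m = P by simp [frag, ← hP]] at this
    exact_mod_cast this ▸ hP8
  · obtain ⟨d, -, hdj, hd⟩ := exists_eq_of_le_add_one_of_monotone
      (f := fun d => (misCount P Q (j - d) m : ℤ)) (g := fun d => mismatchBudget m k (m - (j - d)))
      (fun d => by have := misCount_le_misCount_add P Q (j - (d + 1)) m (j - d) m; omega)
      (fun _ _ h => mismatchBudget_mono m k (Nat.sub_le_sub_left (Nat.sub_le_sub_left h j) m))
      (Nat.zero_le j) (by simpa using hlt) (by simpa [mismatchBudget_self k hm] using hge)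
    have hlen : m ≤ 8 * k * (m - (j - d)) := by
      have : 8 * 1 * (m - (j - d)) ≤ 8 * k * (m - (j - d)) := by gcongr; omega
      omega
    exact Or.inl ((IsRepetitiveRegion.of_misCount (by omega) hP.ge hlen hQ hQm hd)
      |>.hasRepetitiveRegions (by omega) (by omega))

end Extension

section Scan

variable [DecidableEq α] [Inhabited α]

structure ScanState (P : List α) (m k j : ℕ) where
  nBreaks : ℕ
  breaks : Fin nBreaks → ℕ
  nRegions : ℕ
  start : Fin nRegions → ℕ
  len : Fin nRegions → ℕ
  root : Fin nRegions → List α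
  nBreaks_le : nBreaks ≤ 2 * k
  le_length : j ≤ m
  breaks_disjoint : DisjointBefore breaks (fun _ => m / (8 * k)) j
  isBreak : ∀ i, IsBreak P m k (breaks i)
  region_disjoint : DisjointBefore start len j
  isRegion : ∀ i, IsRepetitiveRegion P m k (start i) (len i) (root i)
  le_covered : j ≤ nBreaks * (m / (8 * k)) + ∑ i, len i

namespace ScanState

variable {P : List α} {m k j : ℕ}

def init : ScanState P m k 0 where
  nBreaks := 0
  breaks := Fin.elim0
  nRegions := 0
  start := Fin.elim0
  len := Fin.elim0
  root := Fin.elim0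
  nBreaks_le := Nat.zero_le _
  le_length := Nat.zero_le _
  breaks_disjoint := ⟨fun i => i.elim0, fun i => i.elim0⟩
  isBreak := fun i => i.elim0
  region_disjoint := ⟨fun i => i.elim0, fun i => i.elim0⟩
  isRegion := fun i => i.elim0
  le_covered := Nat.zero_le _

def addBreak (S : ScanState P m k j) (hnb : S.nBreaks < 2 * k) (hj : j + m / (8 * k) ≤ m)
    (hb : IsBreak P m k j) : ScanState P m k (j + m / (8 * k)) where
  nBreaks := S.nBreaks + 1
  breaks := Fin.snoc S.breaks j
  nRegions := S.nRegions
  start := S.start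
  len := S.len
  root := S.root
  nBreaks_le := hnb
  le_length := hj
  breaks_disjoint := S.breaks_disjoint.snoc le_rfl
  isBreak := Fin.lastCases (by simpa using hb) fun i => by simpa using S.isBreak i
  region_disjoint := S.region_disjoint.mono (Nat.le_add_right _ _)
  isRegion := S.isRegion
  le_covered := by have := S.le_covered; rw [add_one_mul S.nBreaks]; omega

def addRegion (S : ScanState P m k j) {e : ℕ} {Q : List α} (hje : j ≤ e) (he : e ≤ m)
    (hR : IsRepetitiveRegion P m k j (e - j) Q) : ScanState P m k e where
  nBreaks := S.nBreaks
  breaks := S.breaks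
  nRegions := S.nRegions + 1
  start := Fin.snoc S.start j
  len := Fin.snoc S.len (e - j)
  root := Fin.snoc S.root Q
  nBreaks_le := S.nBreaks_le
  le_length := he
  breaks_disjoint := S.breaks_disjoint.mono hje
  isBreak := S.isBreak
  region_disjoint := by
    have h := DisjointBefore.snoc (len := Fin.snoc S.len (e - j))
      (by simpa using S.region_disjoint) le_rfl
    rwa [Fin.snoc_last, Nat.add_sub_cancel' hje] at h
  isRegion := Fin.lastCases (by simpa using hR) fun i => by simpa using S.isRegion i
  le_covered := by have := S.le_covered; simp [Fin.sum_univ_castSucc]; omega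

theorem hasBreaks (S : ScanState P m k j) (h : S.nBreaks = 2 * k) : HasBreaks P m k := by
  revert h
  obtain ⟨_, breaks, -, -, -, -, -, hjm, hdisj, hbrk, -, -, -⟩ := S
  rintro rfl
  exact ⟨breaks, fun i => (hdisj.1 i).trans hjm, hdisj.2, hbrk⟩

theorem hasRepetitiveRegions (S : ScanState P m k j) (h : 3 * m ≤ 8 * ∑ i, S.len i) :
    HasRepetitiveRegions P m k :=
  ⟨S.nRegions, S.start, S.len, S.root, fun i => (S.region_disjoint.1 i).trans S.le_length,
    S.region_disjoint.2, h, fun i => (S.isRegion i).1, fun i => (S.isRegion i).2.1,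
    fun i => (S.isRegion i).2.2.1, fun i => (S.isRegion i).2.2.2⟩

theorem step (S : ScanState P m k j) (hP : P.length = m) (hm : 128 * k ≤ m)
    (hnb : S.nBreaks < 2 * k) (hcov : 8 * ∑ i, S.len i < 3 * m) :
    HasRepetitiveRegions P m k ∨ HasApproxPeriod P m k ∨
      ∃ j', j < j' ∧ Nonempty (ScanState P m k j') := by
  set L := m / (8 * k)
  have hk : 0 < k := by omega
  have hL : 8 * k * L ≤ m := Nat.mul_div_le m (8 * k)
  have hL' : m < 8 * k * (L + 1) := Nat.lt_mul_div_succ m (by omega)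
  have hL0 : 0 < L := Nat.div_pos (by omega) (by omega)
  have hroom : 8 * (j + L) < 5 * m := by
    have h1 : j ≤ S.nBreaks * L + ∑ i, S.len i := S.le_covered
    have h2 : (S.nBreaks + 1) * L ≤ 2 * k * L := Nat.mul_le_mul_right L hnb
    have h3 : 8 * (2 * k * L) = 2 * (8 * k * L) := by ring
    rw [add_one_mul] at h2
    omega
  by_cases hbrk : IsBreak P m k j
  · exact Or.inr (Or.inr ⟨j + L, by omega, ⟨S.addBreak hnb (by omega) hbrk⟩⟩)
  have hper : 128 * k * per (frag P j (j + L)) ≤ m := not_lt.1 hbrk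
  have hperL : per (frag P j (j + L)) ≤ L := by
    have : 8 * k * (16 * per (frag P j (j + L))) < 8 * k * (L + 1) := by
      rw [← Nat.mul_assoc, show 8 * k * 16 = 128 * k by ring]; omega
    have := Nat.lt_of_mul_lt_mul_left this
    omega
  obtain ⟨Q, hQ, hQlen, h0⟩ := exists_primitive_misCount_eq_zero (by omega) hperL
  rw [← hQlen] at hper
  rcases exists_isRepetitiveRegion_or_misCount_lt hP hm hk (by omega) hQ hper h0 with
    ⟨e, hje, hem, hR⟩ | hlt
  · exact Or.inr (Or.inr ⟨e, by omega, ⟨S.addRegion (by omega) hem hR⟩⟩)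
  · exact (hasRepetitiveRegions_or_hasApproxPeriod hP hk (by omega) hQ hper hlt).imp_right Or.inl

theorem trichotomy (S : ScanState P m k j) (hP : P.length = m) (hm : 128 * k ≤ m) :
    HasBreaks P m k ∨ HasRepetitiveRegions P m k ∨ HasApproxPeriod P m k := by
  induction hd : m - j using Nat.strong_induction_on generalizing j with
  | _ d ih =>
    by_cases hnb : S.nBreaks = 2 * k
    · exact Or.inl (S.hasBreaks hnb)
    by_cases hcov : 3 * m ≤ 8 * ∑ i, S.len i
    · exact Or.inr (Or.inl (S.hasRepetitiveRegions hcov))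
    rcases S.step hP hm (by have := S.nBreaks_le; omega) (by omega) with h | h | ⟨j', hjj', ⟨S'⟩⟩
    · exact Or.inr (Or.inl h)
    · exact Or.inr (Or.inr h)
    · exact ih (m - j') (by have := S'.le_length; omega) S' rfl

end ScanState

end Scan

theorem pattern_analysis_general {α : Type*} [DecidableEq α] [Inhabited α]
    (P : List α) (m k : ℕ) (hP : P.length = m) :
    (∃ b : Fin (2 * k) → ℕ,
        (∀ i, b i + m / (8 * k) ≤ m) ∧
        (∀ i j, i ≠ j → b i + m / (8 * k) ≤ b j ∨ b j + m / (8 * k) ≤ b i) ∧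
        (∀ i, m < 128 * k * per (frag P (b i) (b i + m / (8 * k))))) ∨
    (∃ (r : ℕ) (s len : Fin r → ℕ) (Qf : Fin r → List α),
        (∀ i, s i + len i ≤ m) ∧
        (∀ i j, i ≠ j → s i + len i ≤ s j ∨ s j + len j ≤ s i) ∧
        3 * m ≤ 8 * ∑ i, len i ∧
        (∀ i, m ≤ 8 * k * len i) ∧
        (∀ i, Primitive (Qf i)) ∧
        (∀ i, 128 * k * (Qf i).length ≤ m) ∧
        (∀ i, (hammingStar (frag P (s i) (s i + len i)) (Qf i) : ℤ)
            = ⌈(8 * k * len i : ℚ) / (m : ℚ)⌉)) ∨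
    (∃ Q : List α, Primitive Q ∧ 128 * k * Q.length ≤ m ∧ hammingStar P Q < 8 * k) := by
  by_cases hm : m < 128 * k
  · exact Or.inl (hasBreaks_of_lt P hm)
  · exact ScanState.init.trichotomy hP (not_lt.1 hm)

/-- trichotomy — breaks, repetitive regions, or an approximate period. -/
theorem pattern_analysis {α : Type*} [DecidableEq α] [Inhabited α]
    (P : List α) (m k : ℕ) (hP : P.length = m) (hk1 : 1 ≤ k) (hkm : k ≤ m) :
    (∃ b : Fin (2 * k) → ℕ,
        (∀ i, b i + m / (8 * k) ≤ m) ∧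
        (∀ i j, i ≠ j → b i + m / (8 * k) ≤ b j ∨ b j + m / (8 * k) ≤ b i) ∧
        (∀ i, m < 128 * k * per (frag P (b i) (b i + m / (8 * k))))) ∨
    (∃ (r : ℕ) (s len : Fin r → ℕ) (Qf : Fin r → List α),
        (∀ i, s i + len i ≤ m) ∧
        (∀ i j, i ≠ j → s i + len i ≤ s j ∨ s j + len j ≤ s i) ∧
        3 * m ≤ 8 * ∑ i, len i ∧
        (∀ i, m ≤ 8 * k * len i) ∧
        (∀ i, Primitive (Qf i)) ∧
        (∀ i, 128 * k * (Qf i).length ≤ m) ∧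
        (∀ i, (hammingStar (frag P (s i) (s i + len i)) (Qf i) : ℤ)
            = ⌈(8 * k * len i : ℚ) / (m : ℚ)⌉)) ∨
    (∃ Q : List α, Primitive Q ∧ 128 * k * Q.length ≤ m ∧ hammingStar P Q < 8 * k) :=
  pattern_analysis_general P m k hP
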